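/- If the typed unification algorithm returns wrong on input constraints (C, T), then no type substitution unifies all constraints in T. -/

import Mathlib

inductive Tm (F V : Type) : Type
  | var : V → Tm F V
  | app : F → List (Tm F V) → Tm F V

namespace Tm
variable {F V : Type}

def subst (θ : V → Tm F V) : Tm F V → Tm F V
  | var x => θ x
  | app f ts => app f (ts.attach.map (fun t => subst θ t.1))
decreasing_by simp_wf; have := List.sizeOf_lt_of_mem t.2; omega

inductive Occurs (x : V) : Tm F V → Prop
  | var : Occurs x (var x)
  | app {f : F} {ts : List (Tm F V)} {t : Tm F V} : t ∈ ts → Occurs x t → Occurs x (app f ts)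

end Tm


/-- The substitution replacing the single variable `x` by `t`. -/
def single {F V : Type} [DecidableEq V] (x : V) (t : Tm F V) : V → Tm F V :=
  fun y => if y = x then t else Tm.var y

/-- Apply a substitution to both sides of an equation. -/
def applyEq {F V : Type} (σ : V → Tm F V) (p : Tm F V × Tm F V) : Tm F V × Tm F V :=
  (Tm.subst σ p.1, Tm.subst σ p.2)

/-- One step of the Martelli–Montanari rewriting rules on a finite (multi)set of
equations between first-order terms. -/
inductive Step {F V : Type} [DecidableEq V] :
    Multiset (Tm F V × Tm F V) → Multiset (Tm F V × Tm F V) → Prop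
  | decompose (f : F) (ts ss : List (Tm F V)) (R : Multiset (Tm F V × Tm F V))
      (hlen : ts.length = ss.length) :
      Step ((Tm.app f ts, Tm.app f ss) ::ₘ R) (↑(ts.zip ss) + R)
  | delete (t : Tm F V) (R : Multiset (Tm F V × Tm F V)) :
      Step ((t, t) ::ₘ R) R
  | orient (t : Tm F V) (x : V) (R : Multiset (Tm F V × Tm F V))
      (h : ∀ y : V, t ≠ Tm.var y) :
      Step ((t, Tm.var x) ::ₘ R) ((Tm.var x, t) ::ₘ R)
  | elim (x : V) (t : Tm F V) (R : Multiset (Tm F V × Tm F V))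
      (h1 : ¬ Tm.Occurs x t)
      (h2 : ∃ p ∈ R, Tm.Occurs x p.1 ∨ Tm.Occurs x p.2) :
      Step ((Tm.var x, t) ::ₘ R) ((Tm.var x, t) ::ₘ R.map (applyEq (single x t)))

/-- A clash: two applications with different head symbols or different arities. -/
def IsClash {F V : Type} (p : Tm F V × Tm F V) : Prop :=
  ∃ (f g : F) (ts ss : List (Tm F V)),
    p = (Tm.app f ts, Tm.app g ss) ∧ (f ≠ g ∨ ts.length ≠ ss.length)

/-- An occurs-check failure: an equation between a variable and a distinct term
containing it. -/
def IsOccursFail {F V : Type} (p : Tm F V × Tm F V) : Prop :=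
  ∃ (x : V) (t : Tm F V), (p = (Tm.var x, t) ∨ p = (t, Tm.var x)) ∧
    Tm.Occurs x t ∧ t ≠ Tm.var x

/-- A constraint set on which the algorithm fails. -/
def Fails {F V : Type} (S : Multiset (Tm F V × Tm F V)) : Prop :=
  ∃ p ∈ S, IsClash p ∨ IsOccursFail p

/-- A constraint set in solved (normal) form. -/
def SolvedWith {F V : Type} (S : Multiset (Tm F V × Tm F V))
    (L : List (V × Tm F V)) : Prop :=
  S = ↑(L.map (fun p => ((Tm.var p.1 : Tm F V), p.2))) ∧
    (L.map Prod.fst).Nodup ∧ ∀ p ∈ L, ∀ q ∈ L, ¬ Tm.Occurs p.1 q.2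

def Solved {F V : Type} (S : Multiset (Tm F V × Tm F V)) : Prop :=
  ∃ L, SolvedWith S L

/-- `θ` unifies every constraint in `S`. -/
def Unifies {F V : Type} (θ : V → Tm F V) (S : Multiset (Tm F V × Tm F V)) : Prop :=
  ∀ p ∈ S, Tm.subst θ p.1 = Tm.subst θ p.2


/-!
Every Martelli–Montanari step keeps every unifier of the constraint set a unifier of the
result, so a unifier of `T` would unify the failing set `T'`. That is impossible: a clash
`f(τ̄) ≐ g(σ̄)` survives every substitution, and if `α` occurs properly in `τ` then `μ α` is
a proper subterm of `μ τ`, so the two are distinct already by size.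
-/

namespace Tm

variable {F V : Type}

@[induction_eliminator]
theorem induction_on {P : Tm F V → Prop} (var : ∀ x, P (var x))
    (app : ∀ f ts, (∀ t ∈ ts, P t) → P (app f ts)) : ∀ t, P t
  | .var x => var x
  | .app f ts => app f ts fun t _ => induction_on var app t
decreasing_by simp_wf; have := List.sizeOf_lt_of_mem ‹t ∈ ts›; omega

@[simp]
theorem subst_var (θ : V → Tm F V) (x : V) : subst θ (var x) = θ x := by
  rw [subst]

@[simp]
theorem subst_app (θ : V → Tm F V) (f : F) (ts : List (Tm F V)) :
    subst θ (app f ts) = app f (ts.map (subst θ)) := by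
  rw [subst, List.attach_map_val]

theorem subst_subst (θ σ : V → Tm F V) (t : Tm F V) :
    subst θ (subst σ t) = subst (fun y => subst θ (σ y)) t := by
  induction t with
  | var x => simp
  | app f ts ih => simpa using List.map_congr_left ih

theorem sizeOf_lt_sizeOf_app {t : Tm F V} {ts : List (Tm F V)} (f : F) (h : t ∈ ts) :
    sizeOf t < sizeOf (app f ts) := by
  have := List.sizeOf_lt_of_mem h
  simp only [app.sizeOf_spec]
  omega

theorem sizeOf_le_sizeOf_subst_of_occurs (θ : V → Tm F V) {x : V} {t : Tm F V}
    (h : Occurs x t) : sizeOf (θ x) ≤ sizeOf (subst θ t) := by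
  induction h with
  | var => simp
  | @app f ts t hmem _ ih =>
    have := sizeOf_lt_sizeOf_app f (List.mem_map_of_mem (f := subst θ) hmem)
    rw [subst_app]
    omega

theorem subst_ne_of_occurs (θ : V → Tm F V) {x : V} {t : Tm F V} (h : Occurs x t)
    (hne : t ≠ var x) : subst θ t ≠ θ x := by
  cases h with
  | var => exact absurd rfl hne
  | @app f ts t hmem hocc =>
    have hle := sizeOf_le_sizeOf_subst_of_occurs θ hocc
    have hlt := sizeOf_lt_sizeOf_app f (List.mem_map_of_mem (f := subst θ) hmem)
    rw [subst_app]
    intro heq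
    rw [heq] at hlt
    omega

end Tm

section Unifies

variable {F V : Type}

theorem unifies_cons {θ : V → Tm F V} {p : Tm F V × Tm F V} {S : Multiset (Tm F V × Tm F V)} :
    Unifies θ (p ::ₘ S) ↔ Tm.subst θ p.1 = Tm.subst θ p.2 ∧ Unifies θ S :=
  Multiset.forall_mem_cons

theorem unifies_add {θ : V → Tm F V} {S S' : Multiset (Tm F V × Tm F V)} :
    Unifies θ (S + S') ↔ Unifies θ S ∧ Unifies θ S' := by
  simp only [Unifies, Multiset.mem_add, or_imp, forall_and]

theorem unifies_zip_of_map_eq {θ : V → Tm F V} :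
    ∀ {ts ss : List (Tm F V)}, ts.map (Tm.subst θ) = ss.map (Tm.subst θ) →
      Unifies θ ↑(ts.zip ss)
  | [], _, _ | _ :: _, [], _ => by simp [Unifies]
  | t :: ts, s :: ss, h => by
    simp only [List.map_cons, List.cons.injEq] at h
    rw [List.zip_cons_cons, ← Multiset.cons_coe, unifies_cons]
    exact ⟨h.1, unifies_zip_of_map_eq h.2⟩

theorem unifies_map_applyEq {θ σ : V → Tm F V} {S : Multiset (Tm F V × Tm F V)} :
    Unifies θ (S.map (applyEq σ)) ↔ Unifies (fun y => Tm.subst θ (σ y)) S := by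
  simp only [Unifies, Multiset.forall_mem_map_iff, applyEq, Tm.subst_subst]

theorem subst_comp_single_of_eq [DecidableEq V] {θ : V → Tm F V} {x : V} {t : Tm F V}
    (h : Tm.subst θ t = θ x) : (fun y => Tm.subst θ (single x t y)) = θ := by
  funext y
  by_cases hy : y = x
  · simp [single, hy, h]
  · simp [single, hy]

theorem Unifies.of_step [DecidableEq V] {θ : V → Tm F V} {S S' : Multiset (Tm F V × Tm F V)}
    (h : Step S S') (hu : Unifies θ S) : Unifies θ S' := by
  cases h with
  | decompose f ts ss R _ =>
    obtain ⟨hfs, hR⟩ := unifies_cons.1 hu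
    simp only [Tm.subst_app, Tm.app.injEq] at hfs
    exact unifies_add.2 ⟨unifies_zip_of_map_eq hfs.2, hR⟩
  | delete t R => exact (unifies_cons.1 hu).2
  | orient t x R _ =>
    obtain ⟨htx, hR⟩ := unifies_cons.1 hu
    exact unifies_cons.2 ⟨htx.symm, hR⟩
  | elim x t R _ _ =>
    obtain ⟨hxt, hR⟩ := unifies_cons.1 hu
    rw [Tm.subst_var] at hxt
    refine unifies_cons.2 ⟨by rwa [Tm.subst_var], ?_⟩
    rwa [unifies_map_applyEq, subst_comp_single_of_eq hxt.symm]

theorem Unifies.of_reflTransGen [DecidableEq V] {θ : V → Tm F V}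
    {S S' : Multiset (Tm F V × Tm F V)} (h : Relation.ReflTransGen Step S S')
    (hu : Unifies θ S) : Unifies θ S' := by
  induction h with
  | refl => exact hu
  | tail _ hstep ih => exact ih.of_step hstep

theorem IsClash.subst_ne {p : Tm F V × Tm F V} (h : IsClash p) (θ : V → Tm F V) :
    Tm.subst θ p.1 ≠ Tm.subst θ p.2 := by
  obtain ⟨f, g, ts, ss, rfl, hne⟩ := h
  simp only [Tm.subst_app]
  intro heq
  obtain ⟨rfl, hmap⟩ := Tm.app.inj heq
  exact hne.elim (· rfl) (· (by simpa using congrArg List.length hmap))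

theorem IsOccursFail.subst_ne {p : Tm F V × Tm F V} (h : IsOccursFail p) (θ : V → Tm F V) :
    Tm.subst θ p.1 ≠ Tm.subst θ p.2 := by
  obtain ⟨x, t, rfl | rfl, hocc, hne⟩ := h
  · simpa using (Tm.subst_ne_of_occurs θ hocc hne).symm
  · simpa using Tm.subst_ne_of_occurs θ hocc hne

theorem Fails.not_unifies {S : Multiset (Tm F V × Tm F V)} (hf : Fails S) (θ : V → Tm F V) :
    ¬ Unifies θ S := by
  obtain ⟨p, hp, hclash | hocc⟩ := hf
  · exact fun hu => hclash.subst_ne θ (hu p hp)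
  · exact fun hu => hocc.subst_ne θ (hu p hp)

end Unifies

/-- If the typed unification algorithm returns `wrong` on the type
constraints `T`, then no type substitution unifies all constraints in `T`. -/
theorem wrong_result_sound {TF TV : Type} [DecidableEq TV]
    (T T' : Multiset (Tm TF TV × Tm TF TV))
    (hT : Relation.ReflTransGen Step T T') (hfail : Fails T') :
    ¬ ∃ μ : TV → Tm TF TV, Unifies μ T := by
  rintro ⟨μ, hμ⟩
  exact hfail.not_unifies μ (hμ.of_reflTransGen hT)
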